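/- In H = H_{p,t,s} with t > s and k² - k + 1 ≡ 0 (mod p^{t-s}), we have (a⁻¹ (a⁻¹ b a^k)^(-k))^(p^s) = (a^(p^s))^(k² - k + 1)·(-1) = 1; that is, the element a⁻¹(a⁻¹ b a^k)^(-k) has order dividing p^s. -/

import Mathlib

/-!
Since `c` is central of order `p` and `H / ⟨c⟩` is abelian, the class-two identity
`(x y)^n = x^n y^n [y, x]^(n choose 2)` and `p ∣ p choose 2` (`p` odd) make `x ↦ x^p`, hence
`φ : x ↦ x^(p^s)`, an endomorphism of `H`. As `φ b = 1`, we get `φ (a⁻¹ b a^k) = φ(a)^(k-1)` and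
`φ (a⁻¹ (a⁻¹ b a^k)^(-k)) = φ(a)^(-(k² - k + 1)) = a^(-p^s (k² - k + 1))`, which is trivial because
`p^t = p^s p^(t-s)` divides the exponent.
-/

open scoped commutatorElement

/-- Relations for the inner-abelian non-metacyclic p-group
`H_{p,t,s} = ⟨a, b, c | a^(p^t) = b^(p^s) = c^p = 1, [a,b] = c, [c,a] = [c,b] = 1⟩`. -/
def HRels (p t s : ℕ) : Set (FreeGroup (Fin 3)) :=
  {FreeGroup.of (0 : Fin 3) ^ p ^ t, FreeGroup.of (1 : Fin 3) ^ p ^ s, FreeGroup.of (2 : Fin 3) ^ p,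
   ⁅FreeGroup.of (0 : Fin 3), FreeGroup.of (1 : Fin 3)⁆ * (FreeGroup.of (2 : Fin 3))⁻¹,
   ⁅FreeGroup.of (2 : Fin 3), FreeGroup.of (0 : Fin 3)⁆, ⁅FreeGroup.of (2 : Fin 3), FreeGroup.of (1 : Fin 3)⁆}

/-- The group `H_{p,t,s}` as a presented group. -/
abbrev Hgrp (p t s : ℕ) := PresentedGroup (HRels p t s)

/-- The generator `a` of `H_{p,t,s}`. -/
def aa (p t s : ℕ) : Hgrp p t s := PresentedGroup.of (0 : Fin 3)

/-- The generator `b` of `H_{p,t,s}`. -/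
def bb (p t s : ℕ) : Hgrp p t s := PresentedGroup.of (1 : Fin 3)

/-- The generator `c = [a,b]` of `H_{p,t,s}`. -/
def cc (p t s : ℕ) : Hgrp p t s := PresentedGroup.of (2 : Fin 3)

section ClassTwo

variable {G : Type*} [Group G]

theorem pow_mul_eq_commutator_pow_mul {x y : G} (hy : Commute ⁅y, x⁆ y) (n : ℕ) :
    y ^ n * x = ⁅y, x⁆ ^ n * x * y ^ n := by
  have hyx : y * x = ⁅y, x⁆ * x * y := by rw [commutatorElement_def]; group
  induction n with
  | zero => simp
  | succ n ih =>
    calc y ^ (n + 1) * x = y * ⁅y, x⁆ ^ n * x * y ^ n := by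
          rw [pow_succ', mul_assoc, ih]; simp only [mul_assoc]
      _ = ⁅y, x⁆ ^ n * (y * x) * y ^ n := by rw [← (hy.pow_left n).eq]; simp only [mul_assoc]
      _ = ⁅y, x⁆ ^ (n + 1) * x * y ^ (n + 1) := by
          rw [hyx, pow_succ, pow_succ']; simp only [mul_assoc]

theorem mul_pow_of_commute_commutator {x y : G} (hx : Commute ⁅y, x⁆ x)
    (hy : Commute ⁅y, x⁆ y) (n : ℕ) : (x * y) ^ n = x ^ n * y ^ n * ⁅y, x⁆ ^ n.choose 2 := by
  induction n with
  | zero => simp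
  | succ n ih =>
    have hxy : Commute (⁅y, x⁆ ^ n.choose 2) (x * y) := (hx.mul_right hy).pow_left _
    have hchoose : (n + 1).choose 2 = n + n.choose 2 := by simp [Nat.choose_succ_succ]
    calc (x * y) ^ (n + 1) = x ^ n * (y ^ n * x) * y * ⁅y, x⁆ ^ n.choose 2 := by
          rw [pow_succ, ih, mul_assoc (x ^ n * y ^ n), hxy.eq]; simp only [mul_assoc]
      _ = x ^ n * (⁅y, x⁆ ^ n * (x * y ^ (n + 1))) * ⁅y, x⁆ ^ n.choose 2 := by
          rw [pow_mul_eq_commutator_pow_mul hy, pow_succ y]; simp only [mul_assoc]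
      _ = x ^ (n + 1) * y ^ (n + 1) * ⁅y, x⁆ ^ (n + 1).choose 2 := by
          rw [((hx.mul_right (hy.pow_right _)).pow_left n).eq, hchoose, pow_add ⁅y, x⁆,
            pow_succ x]
          simp only [mul_assoc]

theorem mul_pow_of_commutator_pow_eq_one {x y : G} (hx : Commute ⁅y, x⁆ x)
    (hy : Commute ⁅y, x⁆ y) {n : ℕ} (hn : Odd n) (h : ⁅y, x⁆ ^ n = 1) :
    (x * y) ^ n = x ^ n * y ^ n := by
  obtain ⟨m, rfl⟩ := hn
  have hchoose : (2 * m + 1).choose 2 = (2 * m + 1) * m := by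
    rw [Nat.choose_two_right, Nat.add_sub_cancel, mul_left_comm, Nat.mul_div_cancel_left _ two_pos]
  rw [mul_pow_of_commute_commutator hx hy, hchoose, pow_mul, h, one_pow, mul_one]

theorem mul_pow_pow_of_commutator_mem_center (hcen : ∀ x y : G, ⁅x, y⁆ ∈ Subgroup.center G)
    {n : ℕ} (hn : Odd n) (hexp : ∀ x y : G, ⁅x, y⁆ ^ n = 1) (s : ℕ) (x y : G) :
    (x * y) ^ n ^ s = x ^ n ^ s * y ^ n ^ s := by
  have hcomm : ∀ x y z : G, Commute ⁅x, y⁆ z := fun x y z => (hcen x y).comm z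
  induction s with
  | zero => simp
  | succ s ih =>
    rw [pow_succ, pow_mul, pow_mul, pow_mul, ih]
    exact mul_pow_of_commutator_pow_eq_one (hcomm _ _ _) (hcomm _ _ _) hn (hexp _ _)

theorem commutator_mem_of_closure_eq_top {s : Set G} (hs : Subgroup.closure s = ⊤)
    {N : Subgroup G} [N.Normal] (h : ∀ x ∈ s, ∀ y ∈ s, ⁅x, y⁆ ∈ N) (x y : G) : ⁅x, y⁆ ∈ N := by
  -- `G ⧸ N` is generated by the pairwise commuting images of `s`, hence abelian.
  have hQ : Subgroup.closure (QuotientGroup.mk' N '' s) = ⊤ := by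
    rw [← MonoidHom.map_closure, hs, ← MonoidHom.range_eq_map, QuotientGroup.range_mk']
  have hcomm := Subgroup.isMulCommutative_closure (k := QuotientGroup.mk' N '' s) <| by
    rintro _ ⟨x, hx, rfl⟩ _ ⟨y, hy, rfl⟩
    rw [← commutatorElement_eq_one_iff_mul_comm, ← map_commutatorElement, QuotientGroup.mk'_apply,
      QuotientGroup.eq_one_iff]
    exact h x hx y hy
  rw [hQ] at hcomm
  have hxy := hcomm.is_comm.comm ⟨(x : G ⧸ N), trivial⟩ ⟨(y : G ⧸ N), trivial⟩
  rw [← QuotientGroup.eq_one_iff, ← QuotientGroup.mk'_apply, map_commutatorElement,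
    commutatorElement_eq_one_iff_mul_comm]
  exact congrArg Subtype.val hxy

end ClassTwo

namespace Hgrp

variable {p t s : ℕ}

theorem aa_pow_eq_one : aa p t s ^ p ^ t = 1 := by
  rw [aa, PresentedGroup.of, ← map_pow]
  exact PresentedGroup.one_of_mem (by simp [HRels])

theorem bb_pow_eq_one : bb p t s ^ p ^ s = 1 := by
  rw [bb, PresentedGroup.of, ← map_pow]
  exact PresentedGroup.one_of_mem (by simp [HRels])

theorem cc_pow_eq_one : cc p t s ^ p = 1 := by
  rw [cc, PresentedGroup.of, ← map_pow]
  exact PresentedGroup.one_of_mem (by simp [HRels])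

theorem commutator_aa_bb : ⁅aa p t s, bb p t s⁆ = cc p t s := by
  rw [aa, bb, cc, PresentedGroup.of, PresentedGroup.of, PresentedGroup.of,
    ← map_commutatorElement]
  exact PresentedGroup.mk_eq_mk_of_mul_inv_mem (by simp [HRels])

theorem commute_cc_aa : Commute (cc p t s) (aa p t s) := by
  rw [← commutatorElement_eq_one_iff_commute, aa, cc, PresentedGroup.of, PresentedGroup.of,
    ← map_commutatorElement]
  exact PresentedGroup.one_of_mem (by simp [HRels])

theorem commute_cc_bb : Commute (cc p t s) (bb p t s) := by
  rw [← commutatorElement_eq_one_iff_commute, bb, cc, PresentedGroup.of, PresentedGroup.of,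
    ← map_commutatorElement]
  exact PresentedGroup.one_of_mem (by simp [HRels])

theorem closure_aa_bb_cc : Subgroup.closure {aa p t s, bb p t s, cc p t s} = ⊤ := by
  convert PresentedGroup.closure_range_of (HRels p t s) using 2
  ext x
  simp [Fin.exists_fin_succ, aa, bb, cc, eq_comm]

theorem cc_mem_center : cc p t s ∈ Subgroup.center (Hgrp p t s) := by
  rw [← Subgroup.centralizer_univ, ← Subgroup.coe_top, ← closure_aa_bb_cc,
    Subgroup.centralizer_closure]
  rintro _ (rfl | rfl | rfl)
  · exact commute_cc_aa.symm.eq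
  · exact commute_cc_bb.symm.eq
  · rfl

instance : (Subgroup.zpowers (cc p t s)).Normal where
  conj_mem z hz g := by
    rwa [Subgroup.mem_center_iff.mp (Subgroup.zpowers_le.mpr cc_mem_center hz) g,
      mul_inv_cancel_right]

theorem commutator_mem_zpowers_cc (x y : Hgrp p t s) : ⁅x, y⁆ ∈ Subgroup.zpowers (cc p t s) := by
  have hcx : ∀ g : Hgrp p t s, ⁅cc p t s, g⁆ = 1 := fun g =>
    commutatorElement_eq_one_iff_commute.mpr (cc_mem_center.comm g)
  have hxc : ∀ g : Hgrp p t s, ⁅g, cc p t s⁆ = 1 := fun g =>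
    commutatorElement_eq_one_iff_commute.mpr (cc_mem_center.comm g).symm
  refine commutator_mem_of_closure_eq_top closure_aa_bb_cc ?_ x y
  rintro x (rfl | rfl | rfl) y (rfl | rfl | rfl) <;>
    simp only [commutatorElement_self, commutator_aa_bb, ← commutatorElement_inv (aa p t s),
      hcx, hxc, one_mem, inv_mem_iff, Subgroup.mem_zpowers]

theorem mul_pow_pow (hp : Odd p) (n : ℕ) (x y : Hgrp p t s) :
    (x * y) ^ p ^ n = x ^ p ^ n * y ^ p ^ n := by
  refine mul_pow_pow_of_commutator_mem_center (fun x y => ?_) hp (fun x y => ?_) n x y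
  · exact Subgroup.zpowers_le.mpr cc_mem_center (commutator_mem_zpowers_cc x y)
  · obtain ⟨m, hm⟩ := Subgroup.mem_zpowers_iff.mp (commutator_mem_zpowers_cc x y)
    rw [← hm, ← zpow_natCast, ← zpow_mul, mul_comm, zpow_mul, zpow_natCast, cc_pow_eq_one,
      one_zpow]

def powPowHom (hp : Odd p) (n : ℕ) : Hgrp p t s →* Hgrp p t s :=
  MonoidHom.mk' (· ^ p ^ n) (mul_pow_pow hp n)

end Hgrp

theorem stmt16_general (p t s : ℕ) (hodd : Odd p) (hts : s < t)
    (k : ℤ) (hk : (p : ℤ) ^ (t - s) ∣ k ^ 2 - k + 1) :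
    ((aa p t s)⁻¹ * ((aa p t s)⁻¹ * bb p t s * aa p t s ^ k) ^ (-k)) ^ (p ^ s) =
      (aa p t s ^ (p ^ s : ℕ)) ^ (-(k ^ 2 - k + 1)) ∧
    ((aa p t s)⁻¹ * ((aa p t s)⁻¹ * bb p t s * aa p t s ^ k) ^ (-k)) ^ (p ^ s) = 1 := by
  set φ := Hgrp.powPowHom (t := t) hodd s
  set a := aa p t s
  have hb : φ (bb p t s) = 1 := Hgrp.bb_pow_eq_one
  have hpow : φ (a⁻¹ * (a⁻¹ * bb p t s * a ^ k) ^ (-k)) = φ a ^ (-(k ^ 2 - k + 1)) := by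
    simp only [map_mul, map_inv, map_zpow, hb]
    group
  have hone : (a ^ p ^ s) ^ (-(k ^ 2 - k + 1)) = 1 := by
    have hpt : (p : ℤ) ^ t = p ^ s * p ^ (t - s) := by rw [← pow_add, Nat.add_sub_cancel' hts.le]
    rw [← zpow_natCast, ← zpow_mul, ← orderOf_dvd_iff_zpow_eq_one]
    refine (Int.natCast_dvd_natCast.mpr (orderOf_dvd_of_pow_eq_one Hgrp.aa_pow_eq_one)).trans ?_
    push_cast
    exact hpt ▸ mul_dvd_mul_left _ (dvd_neg.mpr hk)
  exact ⟨hpow, hpow.trans hone⟩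

theorem stmt16 (p t s : ℕ) (hp : p.Prime) (hodd : Odd p) (hs : 1 ≤ s) (hts : s < t)
    (k : ℤ) (hk : (p : ℤ) ^ (t - s) ∣ k ^ 2 - k + 1) :
    ((aa p t s)⁻¹ * ((aa p t s)⁻¹ * bb p t s * aa p t s ^ k) ^ (-k)) ^ (p ^ s) =
      (aa p t s ^ (p ^ s : ℕ)) ^ (-(k ^ 2 - k + 1)) ∧
    ((aa p t s)⁻¹ * ((aa p t s)⁻¹ * bb p t s * aa p t s ^ k) ^ (-k)) ^ (p ^ s) = 1 :=
  stmt16_general p t s hodd hts k hk
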